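/- Let W be a unitary on ℂ²⊗ℂ^{2ⁿ} with W|0⟩|0ⁿ⟩ = A|0⟩|Φ⟩ + √(1-A²)|⊥⟩ where 0 < A < 1, (⟨0|⊗I)|⊥⟩ = 0, and |Φ⟩, |⊥⟩ are unit vectors. Define |⊥'⟩ = -√(1-A²)|0⟩|Φ⟩ + A|⊥⟩, R₀ = (2|0⟩⟨0|-I)⊗I, and R₁ = W(2|0^{n+1}⟩⟨0^{n+1}|-I)W†. Then relative to the orthonormal basis {W|0⟩|0ⁿ⟩, |⊥'⟩} of their common invariant 2-dimensional subspace, R₀ is represented by the matrix [[2A²-1, -2A√(1-A²)], [-2A√(1-A²), 1-2A²]] and R₁ by diag(1,-1). -/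
import Mathlib


open Matrix Complex Finset

/-- The basis state `|0⟩|0ⁿ⟩`. -/
def e00 (n : ℕ) : Fin 2 × (Fin n → Fin 2) → ℂ :=
  fun cp => if cp = ((0 : Fin 2), fun _ => (0 : Fin 2)) then 1 else 0

/-- The state `|0⟩|Φ⟩`. -/
def zeroTensor (n : ℕ) (Φ : (Fin n → Fin 2) → ℂ) : Fin 2 × (Fin n → Fin 2) → ℂ :=
  fun cp => if cp.1 = 0 then Φ cp.2 else 0

/-- The reflection `R₀ = (2|0⟩⟨0| - I) ⊗ I`. -/
def R0 (n : ℕ) : Matrix (Fin 2 × (Fin n → Fin 2)) (Fin 2 × (Fin n → Fin 2)) ℂ :=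
  Matrix.diagonal fun cp => if cp.1 = 0 then 1 else -1

/-- The reflection `R₁ = W(2|0^{n+1}⟩⟨0^{n+1}| - I)W†`. -/
noncomputable def R1 (n : ℕ) (W : Matrix (Fin 2 × (Fin n → Fin 2)) (Fin 2 × (Fin n → Fin 2)) ℂ) :
    Matrix (Fin 2 × (Fin n → Fin 2)) (Fin 2 × (Fin n → Fin 2)) ℂ :=
  W * ((2 : ℂ) • Matrix.vecMulVec (e00 n) (star (e00 n)) - 1) * Wᴴ

/-- In the amplitude-estimation setup, relative to the basis `{W|0⟩|0ⁿ⟩, |⊥'⟩}` of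
their common invariant subspace, `R₀` is represented by
`[[2A²-1, -2A√(1-A²)], [-2A√(1-A²), 1-2A²]]` and `R₁` by `diag(1,-1)`. -/
theorem stmt9 (n : ℕ)
    (W : Matrix (Fin 2 × (Fin n → Fin 2)) (Fin 2 × (Fin n → Fin 2)) ℂ)
    (hW : W ∈ Matrix.unitaryGroup (Fin 2 × (Fin n → Fin 2)) ℂ)
    (A : ℝ) (hA0 : 0 < A) (hA1 : A < 1)
    (Φ : (Fin n → Fin 2) → ℂ) (hΦ : ∑ p, Complex.normSq (Φ p) = 1)
    (perp : Fin 2 × (Fin n → Fin 2) → ℂ) (hperp : ∑ cp, Complex.normSq (perp cp) = 1)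
    (hperp0 : ∀ p, perp (0, p) = 0)
    (hdecomp : W.mulVec (e00 n) =
      ((A : ℝ) : ℂ) • zeroTensor n Φ + ((Real.sqrt (1 - A ^ 2) : ℝ) : ℂ) • perp) :
    let w := W.mulVec (e00 n)
    let perp' := (-((Real.sqrt (1 - A ^ 2) : ℝ) : ℂ)) • zeroTensor n Φ + ((A : ℝ) : ℂ) • perp
    (R0 n).mulVec w =
        ((2 * A ^ 2 - 1 : ℝ) : ℂ) • w + ((-(2 * A * Real.sqrt (1 - A ^ 2)) : ℝ) : ℂ) • perp' ∧
      (R0 n).mulVec perp' =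
        ((-(2 * A * Real.sqrt (1 - A ^ 2)) : ℝ) : ℂ) • w + ((1 - 2 * A ^ 2 : ℝ) : ℂ) • perp' ∧
      (R1 n W).mulVec w = w ∧
      (R1 n W).mulVec perp' = -perp' := by
  intro w perp'
  set s : ℝ := Real.sqrt (1 - A ^ 2) with hsdef
  have hs0 : (0:ℝ) ≤ 1 - A ^ 2 := by nlinarith
  have hs2 : s ^ 2 = 1 - A ^ 2 := Real.sq_sqrt hs0
  have hs2' : (s:ℂ) ^ 2 = 1 - (A:ℂ) ^ 2 := by
    have h := congrArg (Complex.ofReal) hs2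
    push_cast at h
    exact h
  have hw : w = ((A : ℝ) : ℂ) • zeroTensor n Φ + ((s : ℝ) : ℂ) • perp := hdecomp
  have hperp' : perp' = (-((s : ℝ) : ℂ)) • zeroTensor n Φ + ((A : ℝ) : ℂ) • perp := rfl
  -- unitary facts
  have hWW : Wᴴ * W = 1 := by
    have h := hW.1
    simpa [Matrix.star_eq_conjTranspose] using h
  have hWW' : W * Wᴴ = 1 := by
    have h := hW.2
    simpa [Matrix.star_eq_conjTranspose] using h
  -- R0 action on the basic vectors
  have hR0z : (R0 n).mulVec (zeroTensor n Φ) = zeroTensor n Φ := by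
    funext cp
    rw [R0, Matrix.mulVec_diagonal]
    by_cases h : cp.1 = 0 <;> simp [zeroTensor, h]
  have hR0p : (R0 n).mulVec perp = -perp := by
    funext cp
    rw [R0, Matrix.mulVec_diagonal]
    by_cases h : cp.1 = 0
    · have : perp cp = 0 := by
        have : cp = (0, cp.2) := Prod.ext h rfl
        rw [this]; exact hperp0 _
      simp [h, this]
    · simp [h]
  -- inner products
  have hzz : star (zeroTensor n Φ) ⬝ᵥ zeroTensor n Φ = 1 := by
    simp only [dotProduct, Pi.star_apply, zeroTensor]
    rw [Fintype.sum_prod_type, Fin.sum_univ_two]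
    simp only [Fin.isValue, if_pos rfl]
    norm_num
    calc ∑ p, (starRingEnd ℂ) (Φ p) * Φ p = ∑ p, ((Complex.normSq (Φ p) : ℝ) : ℂ) := by
          refine Finset.sum_congr rfl fun p _ => ?_
          rw [Complex.normSq_eq_conj_mul_self]
      _ = 1 := by rw [← Complex.ofReal_sum]; rw [hΦ]; norm_num
  have hpp : star perp ⬝ᵥ perp = 1 := by
    simp only [dotProduct, Pi.star_apply]
    calc ∑ cp, (starRingEnd ℂ) (perp cp) * perp cp
        = ∑ cp, ((Complex.normSq (perp cp) : ℝ) : ℂ) := by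
          refine Finset.sum_congr rfl fun cp _ => ?_
          rw [Complex.normSq_eq_conj_mul_self]
      _ = 1 := by rw [← Complex.ofReal_sum]; rw [hperp]; norm_num
  have hzp : star (zeroTensor n Φ) ⬝ᵥ perp = 0 := by
    simp only [dotProduct, Pi.star_apply, zeroTensor]
    rw [Fintype.sum_prod_type, Fin.sum_univ_two]
    simp [hperp0]
  have hpz : star perp ⬝ᵥ zeroTensor n Φ = 0 := by
    simp only [dotProduct, Pi.star_apply, zeroTensor]
    rw [Fintype.sum_prod_type, Fin.sum_univ_two]
    simp [hperp0]
  -- projector action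
  have hP : ∀ x, (Matrix.vecMulVec (e00 n) (star (e00 n))).mulVec x
      = (star (e00 n) ⬝ᵥ x) • e00 n := by
    intro x
    funext i
    simp only [Matrix.mulVec, Matrix.vecMulVec_apply, dotProduct, Pi.smul_apply,
      smul_eq_mul]
    rw [Finset.sum_mul]
    exact Finset.sum_congr rfl fun j _ => by ring
  have hee : star (e00 n) ⬝ᵥ e00 n = 1 := by
    simp [dotProduct, e00, apply_ite]
  -- general form of R1 action
  have hR1 : ∀ x, (R1 n W).mulVec x
      = W.mulVec ((2:ℂ) • ((star (e00 n) ⬝ᵥ (Wᴴ.mulVec x)) • e00 n) - Wᴴ.mulVec x) := by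
    intro x
    rw [R1, ← Matrix.mulVec_mulVec, ← Matrix.mulVec_mulVec]
    rw [Matrix.sub_mulVec, Matrix.smul_mulVec, Matrix.one_mulVec, hP]
  refine ⟨?_, ?_, ?_, ?_⟩
  · rw [hw, hperp', Matrix.mulVec_add, Matrix.mulVec_smul, Matrix.mulVec_smul, hR0z, hR0p]
    match_scalars
    · linear_combination (-2*(A:ℂ)) * hs2'
    · ring
  · rw [hw, hperp', Matrix.mulVec_add, Matrix.mulVec_smul, Matrix.mulVec_smul, hR0z, hR0p]
    match_scalars
    · ring
    · linear_combination (2*(A:ℂ)) * hs2'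
  · have hWe : Wᴴ.mulVec w = e00 n := by
      show Wᴴ.mulVec (W.mulVec (e00 n)) = e00 n
      rw [Matrix.mulVec_mulVec, hWW, Matrix.one_mulVec]
    rw [hR1, hWe, hee]
    have h2 : (2:ℂ) • ((1:ℂ) • e00 n) - e00 n = e00 n := by module
    rw [h2]
  · have hdot : star (e00 n) ⬝ᵥ (Wᴴ.mulVec perp') = 0 := by
      rw [Matrix.dotProduct_mulVec, ← Matrix.star_mulVec]
      have hw' : W.mulVec (e00 n) = ((A : ℝ) : ℂ) • zeroTensor n Φ + ((s : ℝ) : ℂ) • perp :=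
        hdecomp
      rw [hw', hperp']
      simp only [star_add, star_smul, add_dotProduct, smul_dotProduct,
        dotProduct_add, dotProduct_smul, hzz, hzp, hpz, hpp,
        smul_eq_mul, Complex.star_def, Complex.conj_ofReal]
      ring
    rw [hR1, hdot]
    have : (2:ℂ) • ((0:ℂ) • e00 n) - Wᴴ.mulVec perp' = -(Wᴴ.mulVec perp') := by
      module
    rw [this, Matrix.mulVec_neg, Matrix.mulVec_mulVec, hWW', Matrix.one_mulVec]
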